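/- arXiv:1203.0132 — 2 statements merged into one kernel-verified Lean document; each statement's English description precedes it below -/
import Mathlib

section
/- There is an absolute constant δ > 0 such that the following holds: for every 0 < p < 1, every positive integer N, every binomial random variable X with parameters N and p, and every integer r with 1 ≤ r ≤ N − 1 and r ≤ Np, one has Pr(X ≤ r) ≥ δ · max{r^{−1/2}, (N−r)^{−1/2}} · exp(−N Λ*(r/N)). -/
open MeasureTheory Filter Real Asymptotics
open scoped ENNReal Classical

/-- Bernoulli measure on `Bool` with success probability `p`. -/
noncomputable def bern (p : ℝ) : Measure Bool :=
  (ENNReal.ofReal p) • Measure.dirac true + (ENNReal.ofReal (1 - p)) • Measure.dirac false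

instance bern.isFiniteMeasure (p : ℝ) : IsFiniteMeasure (bern p) := by
  constructor
  simp [bern, Measure.add_apply, Measure.smul_apply]

/-- The Erdős–Rényi random graph measure `G(n,p)`: each potential edge (a non-diagonal
element of `Sym2 (Fin n)`) is present independently with probability `p`. -/
noncomputable def gnp (n : ℕ) (p : ℝ) : Measure (Sym2 (Fin n) → Bool) :=
  Measure.pi fun _ => bern p

/-- Number of edges of the graph `ω` induced by the vertex set `S`. -/
noncomputable def edgeCount {n : ℕ} (ω : Sym2 (Fin n) → Bool) (S : Finset (Fin n)) : ℕ :=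
  Set.ncard {e : Sym2 (Fin n) | ¬ e.IsDiag ∧ (∀ v ∈ e, v ∈ S) ∧ ω e = true}

/-- `S` is `t`-sparse in `ω`: the induced subgraph has average degree at most `t`. -/
def TSparse {n : ℕ} (t : ℝ) (ω : Sym2 (Fin n) → Bool) (S : Finset (Fin n)) : Prop :=
  (edgeCount ω S : ℝ) ≤ t * S.card / 2

/-- The `t`-sparsity number: the largest size of a `t`-sparse vertex subset. -/
noncomputable def sparsityNumber {n : ℕ} (t : ℝ) (ω : Sym2 (Fin n) → Bool) : ℕ :=
  sSup {k : ℕ | ∃ S : Finset (Fin n), S.card = k ∧ TSparse t ω S}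

/-- The quantity `ᾱ_{t,p}(n)`. -/
noncomputable def alphaTP (t p : ℝ) (n : ℕ) : ℝ :=
  2 * Real.logb (1/(1-p)) n
    + (t - 2) * Real.logb (1/(1-p)) (Real.logb (1/(1-p)) (n * p))
    - t * Real.logb (1/(1-p)) t
    + t * Real.logb (1/(1-p)) (2 * (1/(1-p)) * p * Real.exp 1)
    + 2 * Real.logb (1/(1-p)) (Real.exp 1 / 2) + 1

/-- The Fenchel–Legendre transform `Λ*` for the Bernoulli(`p`) distribution. -/
noncomputable def LambdaStar (p x : ℝ) : ℝ :=
  x * Real.log (x / p) + (1 - x) * Real.log ((1 - x) / (1 - p))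

/-- The number of `t`-sparse `k`-element vertex subsets in `ω`. -/
noncomputable def sparseCount {n : ℕ} (t : ℝ) (k : ℕ) (ω : Sym2 (Fin n) → Bool) : ℕ :=
  Set.ncard {S : Finset (Fin n) | S.card = k ∧ TSparse t ω S}

/-- The expected number of `t`-sparse `k`-element subsets of `[n]` in `G(n,p)`. -/
noncomputable def expSparseCount (n : ℕ) (p t : ℝ) (k : ℕ) : ℝ :=
  ∫ ω, (sparseCount t k ω : ℝ) ∂(gnp n p)

/-- A fixed `k`-element subset of `Fin n` (when `k ≤ n`): the first `k` vertices. -/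
def segA (n k : ℕ) : Finset (Fin n) := Finset.univ.filter (fun i => (i : ℕ) < k)

/-- A fixed `k`-element subset of `Fin n` meeting `segA n k` in exactly `ℓ` vertices
(when `ℓ ≤ k` and `2k - ℓ ≤ n`). -/
def segB (n k ℓ : ℕ) : Finset (Fin n) :=
  Finset.univ.filter (fun i => k - ℓ ≤ (i : ℕ) ∧ (i : ℕ) < 2 * k - ℓ)

/-- `p(k,ℓ)`: the probability that two fixed `k`-element subsets of `[n]` overlapping in
exactly `ℓ` vertices are both `t`-sparse in `G(n,p)`. -/
noncomputable def pkl (n : ℕ) (p t : ℝ) (k ℓ : ℕ) : ℝ :=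
  (gnp n p {ω | TSparse t ω (segA n k) ∧ TSparse t ω (segB n k ℓ)}).toReal

/-- `f(ℓ) = C(n,k)·C(k,ℓ)·C(n−k,k−ℓ)·p(k,ℓ)`. -/
noncomputable def fSum (n : ℕ) (p t : ℝ) (k ℓ : ℕ) : ℝ :=
  (n.choose k : ℝ) * (k.choose ℓ) * ((n - k).choose (k - ℓ)) * pkl n p t k ℓ

/-!
The binomial sum dominates its last term `C(N, r) p^r q^s`, `s = N - r`. The two-sided Stirling
bounds `√(2πn) (n/e)^n ≤ n! ≤ e √n (n/e)^n` give
`C(N, r) (r/N)^r (s/N)^s ≥ (√(2π) / e²) √(1/r + 1/s)`, and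
`exp (-N Λ*(r/N)) = (Np/r)^r (Nq/s)^s` exactly, so the term is at least
`(√(2π) / e²) √(1/r + 1/s) exp (-N Λ*(r/N))`. Finally
`√(1/r + 1/s)` dominates both `r^(-1/2)` and `s^(-1/2)`.
-/

open Nat in
theorem factorial_le_exp_one_mul_sqrt_mul_pow {n : ℕ} (hn : n ≠ 0) :
    (n ! : ℝ) ≤ exp 1 * √n * (n / exp 1) ^ n := by
  obtain ⟨m, rfl⟩ := Nat.exists_eq_succ_of_ne_zero hn
  -- `stirlingSeq` decreases from `stirlingSeq 1 = e / √2`.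
  have h : Stirling.stirlingSeq (m + 1) ≤ exp 1 / √2 := by
    simpa using Stirling.stirlingSeq'_antitone (Nat.zero_le m)
  rw [Stirling.stirlingSeq, div_le_iff₀ (by positivity)] at h
  calc ((m + 1) ! : ℝ)
      ≤ exp 1 / √2 * (√(2 * (m + 1 : ℕ)) * ((m + 1 : ℕ) / exp 1) ^ (m + 1)) := h
    _ = _ := by rw [Real.sqrt_mul zero_le_two]; field_simp

open Nat in
theorem sqrt_two_pi_div_exp_sq_le_choose_mul {r s : ℕ} (hr : r ≠ 0) (hs : s ≠ 0) :
    √(2 * π) / exp 1 ^ 2 * √((r : ℝ)⁻¹ + (s : ℝ)⁻¹)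
      ≤ (r + s).choose r * ((r : ℝ) / (r + s)) ^ r * ((s : ℝ) / (r + s)) ^ s := by
  have hr' : (0 : ℝ) < r := by positivity
  have hs' : (0 : ℝ) < s := by positivity
  set a := ((r : ℝ) / exp 1) ^ r * ((s : ℝ) / exp 1) ^ s with ha
  have ha' : 0 < a := by positivity
  have hfac : ((r + s)! : ℝ) = (r + s).choose r * (r ! * s !) := by
    have h := Nat.choose_mul_factorial_mul_factorial (Nat.le_add_right r s)
    rw [Nat.add_sub_cancel_left] at h
    rw [← mul_assoc]; exact_mod_cast h.symm
  have hnum : √(2 * π * (r + s)) * a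
      ≤ (r + s).choose r * ((r : ℝ) / (r + s)) ^ r * ((s : ℝ) / (r + s)) ^ s
          * (r ! * s !) := by
    have h := Stirling.le_factorial_stirling (r + s)
    push_cast at h
    calc √(2 * π * (r + s)) * a
        = √(2 * π * (r + s)) * (((r : ℝ) + s) / exp 1) ^ (r + s)
            * ((r : ℝ) / (r + s)) ^ r * ((s : ℝ) / (r + s)) ^ s := by
          have hcancel (k : ℕ) (x : ℝ) :
              (((r : ℝ) + s) / exp 1) ^ k * (x / (r + s)) ^ k = (x / exp 1) ^ k := by
            rw [← mul_pow]; field_simp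
          rw [ha, ← hcancel r r, ← hcancel s s, pow_add]; ring
      _ ≤ ((r + s)! : ℝ) * ((r : ℝ) / (r + s)) ^ r * ((s : ℝ) / (r + s)) ^ s := by gcongr
      _ = _ := by rw [hfac]; ring
  have hden : (r ! * s ! : ℝ) ≤ exp 1 ^ 2 * (√r * √s) * a := by
    calc (r ! * s ! : ℝ)
        ≤ (exp 1 * √r * (r / exp 1) ^ r) * (exp 1 * √s * (s / exp 1) ^ s) := by
          gcongr
          · exact factorial_le_exp_one_mul_sqrt_mul_pow hr
          · exact factorial_le_exp_one_mul_sqrt_mul_pow hs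
      _ = _ := by ring
  have hsqrt : √((r : ℝ)⁻¹ + (s : ℝ)⁻¹) = √(r + s) / (√r * √s) := by
    rw [← Real.sqrt_mul hr'.le, ← Real.sqrt_div' _ (by positivity)]
    congr 1; field_simp; ring
  calc √(2 * π) / exp 1 ^ 2 * √((r : ℝ)⁻¹ + (s : ℝ)⁻¹)
      = √(2 * π * (r + s)) * a / (exp 1 ^ 2 * (√r * √s) * a) := by
        rw [hsqrt, Real.sqrt_mul (by positivity : (0 : ℝ) ≤ 2 * π)]; field_simp
    _ ≤ √(2 * π * (r + s)) * a / (r ! * s !) := by gcongr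
    _ ≤ _ := by rw [div_le_iff₀ (by positivity)]; exact hnum

theorem exp_neg_mul_lambdaStar {p x : ℝ} (hp₀ : 0 < p) (hp₁ : p < 1) (hx₀ : 0 < x)
    (hx₁ : x < 1) (n : ℝ) :
    exp (-n * LambdaStar p x) = (p / x) ^ (n * x) * ((1 - p) / (1 - x)) ^ (n * (1 - x)) := by
  have hq : 0 < 1 - p := sub_pos.2 hp₁
  have hy : 0 < 1 - x := sub_pos.2 hx₁
  rw [Real.rpow_def_of_pos (by positivity), Real.rpow_def_of_pos (by positivity), ← exp_add,
    LambdaStar, ← inv_div x, ← inv_div (1 - x), Real.log_inv, Real.log_inv]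
  ring_nf

theorem sqrt_two_pi_div_exp_sq_mul_exp_le_binomial_term {p : ℝ} (hp₀ : 0 < p) (hp₁ : p < 1)
    {r s : ℕ} (hr : r ≠ 0) (hs : s ≠ 0) :
    √(2 * π) / exp 1 ^ 2 * √((r : ℝ)⁻¹ + (s : ℝ)⁻¹)
        * exp (-((r : ℝ) + s) * LambdaStar p (r / (r + s)))
      ≤ (r + s).choose r * p ^ r * (1 - p) ^ s := by
  have hr' : (0 : ℝ) < r := by positivity
  have hs' : (0 : ℝ) < s := by positivity
  have hx₁ : (r : ℝ) / (r + s) < 1 := (div_lt_one (by positivity)).2 (by linarith)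
  have hy : 1 - (r : ℝ) / (r + s) = s / (r + s) := by field_simp; ring
  rw [exp_neg_mul_lambdaStar hp₀ hp₁ (by positivity) hx₁, hy,
    mul_div_cancel₀ _ (by positivity), mul_div_cancel₀ _ (by positivity), Real.rpow_natCast,
    Real.rpow_natCast, div_pow p, div_pow (1 - p)]
  have hq : 0 < 1 - p := sub_pos.2 hp₁
  calc _ = √(2 * π) / exp 1 ^ 2 * √((r : ℝ)⁻¹ + (s : ℝ)⁻¹) * (p ^ r * (1 - p) ^ s)
        / (((r : ℝ) / (r + s)) ^ r * ((s : ℝ) / (r + s)) ^ s) := by ring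
    _ ≤ _ := by
      rw [div_le_iff₀ (by positivity)]
      calc _ ≤ (r + s).choose r * ((r : ℝ) / (r + s)) ^ r * ((s : ℝ) / (r + s)) ^ s
            * (p ^ r * (1 - p) ^ s) :=
            mul_le_mul_of_nonneg_right (sqrt_two_pi_div_exp_sq_le_choose_mul hr hs) (by positivity)
        _ = _ := by ring

theorem max_rpow_neg_half_le_sqrt_inv_add_inv {a b : ℝ} (ha : 0 < a) (hb : 0 < b) :
    max (a ^ (-(1 / 2) : ℝ)) (b ^ (-(1 / 2) : ℝ)) ≤ √(a⁻¹ + b⁻¹) := by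
  rw [Real.rpow_neg ha.le, Real.rpow_neg hb.le, ← Real.sqrt_eq_rpow, ← Real.sqrt_eq_rpow,
    ← Real.sqrt_inv, ← Real.sqrt_inv, max_le_iff]
  constructor <;> gcongr <;> linarith [inv_pos.2 ha, inv_pos.2 hb]

/-- lower large-deviations bound for the binomial distribution. -/
theorem binomial_lower_deviation :
    ∃ δ : ℝ, 0 < δ ∧ ∀ p : ℝ, 0 < p → p < 1 → ∀ N : ℕ, 0 < N →
      ∀ r : ℕ, 1 ≤ r → r ≤ N - 1 → (r : ℝ) ≤ N * p →
        δ * max ((r : ℝ) ^ (-(1/2) : ℝ)) (((N : ℝ) - r) ^ (-(1/2) : ℝ))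
            * Real.exp (-(N : ℝ) * LambdaStar p ((r : ℝ) / N))
          ≤ ∑ i ∈ Finset.range (r + 1), (N.choose i : ℝ) * p ^ i * (1 - p) ^ (N - i) := by
  refine ⟨√(2 * π) / exp 1 ^ 2, by positivity, fun p hp₀ hp₁ N _ r hr hrN _ => ?_⟩
  obtain ⟨s, rfl⟩ : ∃ s, N = r + s := Nat.exists_eq_add_of_le (by omega)
  have hs : s ≠ 0 := by omega
  push_cast
  rw [add_sub_cancel_left]
  calc _ ≤ √(2 * π) / exp 1 ^ 2 * √((r : ℝ)⁻¹ + (s : ℝ)⁻¹)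
        * exp (-((r : ℝ) + s) * LambdaStar p (r / (r + s))) := by
        gcongr
        exact max_rpow_neg_half_le_sqrt_inv_add_inv (by positivity) (by positivity)
    _ ≤ (r + s).choose r * p ^ r * (1 - p) ^ s :=
        sqrt_two_pi_div_exp_sq_mul_exp_le_binomial_term hp₀ hp₁ (by omega) hs
    _ ≤ _ := by
        simpa using Finset.single_le_sum (f := fun i => ((r + s).choose i : ℝ) * p ^ i
          * (1 - p) ^ (r + s - i)) (fun i _ => by positivity) (Finset.self_mem_range_succ r)
end

section
/- Fix 0 < ξ < 1. Then there exists δ = δ(ξ) > 0 such that for every 0 < p < 1 there is a unique ψ ∈ (0,1) with Λ*(ψp) = (1−ξ) ln b, and moreover this ψ satisfies ψ ≥ δ (uniformly over all p in (0,1)). -/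
open MeasureTheory Filter Real Asymptotics
open scoped ENNReal Classical

/-!
Since `Λ*(x) = p·klFun (x/p) + q·klFun ((1-x)/q)` with `klFun t = t ln t + 1 - t`, the map
`ψ ↦ Λ*(ψp)` is continuous and strictly decreasing on `[0,1]`, from `Λ*(0) = ln b` down to
`Λ*(p) = 0`; this gives existence and uniqueness of `ψ`. For the uniform bound, with
`η t = -t ln t` one has `ln b - Λ*(ψp) = ψp ln b + p η(ψ) + η(1-ψp)`, and `η(1-x) ≤ x`, `p ≤ ln b`
give `ln b - Λ*(ψp) ≤ (2ψ + η(ψ)) ln b`. Hence any `δ` with `2δ + η(δ) < ξ` satisfies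
`Λ*(δp) > (1-ξ) ln b` for every `p`, which forces `ψ ≥ δ`.
-/

namespace InformationTheory

lemma strictAntiOn_klFun : StrictAntiOn klFun (Set.Icc 0 1) := by
  refine strictAntiOn_of_deriv_neg (convex_Icc 0 1) continuous_klFun.continuousOn fun x hx => ?_
  rw [interior_Icc] at hx
  rw [deriv_klFun]
  exact log_neg hx.1 hx.2

lemma strictMonoOn_klFun : StrictMonoOn klFun (Set.Ici 1) := by
  refine strictMonoOn_of_deriv_pos (convex_Ici 1) continuous_klFun.continuousOn fun x hx => ?_
  rw [interior_Ici] at hx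
  rw [deriv_klFun]
  exact log_pos hx

end InformationTheory

open Real Set Topology InformationTheory

section LambdaStar

variable {p : ℝ}

lemma lambdaStar_eq_klFun (hp0 : p ≠ 0) (hp1 : p ≠ 1) (x : ℝ) :
    LambdaStar p x = p * klFun (x / p) + (1 - p) * klFun ((1 - x) / (1 - p)) := by
  have hq : 1 - p ≠ 0 := sub_ne_zero.mpr hp1.symm
  simp only [LambdaStar, klFun_apply]
  field_simp
  ring

lemma continuous_lambdaStar (hp0 : p ≠ 0) (hp1 : p ≠ 1) : Continuous (LambdaStar p) := by
  rw [funext (lambdaStar_eq_klFun hp0 hp1)]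
  fun_prop

lemma lambdaStar_zero (p : ℝ) : LambdaStar p 0 = log (1 / (1 - p)) := by
  simp [LambdaStar]

lemma lambdaStar_self (p : ℝ) : LambdaStar p p = 0 := by
  simp [LambdaStar]

lemma strictAntiOn_lambdaStar (hp0 : 0 < p) (hp1 : p < 1) :
    StrictAntiOn (LambdaStar p) (Icc 0 p) := by
  intro x hx y hy hxy
  have hq : 0 < 1 - p := sub_pos.mpr hp1
  have hfirst : klFun (y / p) < klFun (x / p) :=
    strictAntiOn_klFun
      ⟨div_nonneg hx.1 hp0.le, (div_le_one hp0).mpr hx.2⟩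
      ⟨div_nonneg hy.1 hp0.le, (div_le_one hp0).mpr hy.2⟩
      (div_lt_div_of_pos_right hxy hp0)
  have hsecond : klFun ((1 - y) / (1 - p)) ≤ klFun ((1 - x) / (1 - p)) :=
    strictMonoOn_klFun.monotoneOn
      ((one_le_div hq).mpr (by linarith [hy.2])) ((one_le_div hq).mpr (by linarith [hx.2]))
      (div_le_div_of_nonneg_right (by linarith) hq.le)
  rw [lambdaStar_eq_klFun hp0.ne' hp1.ne, lambdaStar_eq_klFun hp0.ne' hp1.ne]
  linarith [mul_lt_mul_of_pos_left hfirst hp0, mul_le_mul_of_nonneg_left hsecond hq.le]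

lemma lambdaStar_zero_sub_lambdaStar_mul (hp0 : 0 < p) (hp1 : p < 1) {ψ : ℝ} (hψ1 : ψ ≤ 1) :
    LambdaStar p 0 - LambdaStar p (ψ * p) =
      ψ * p * log (1 / (1 - p)) + p * negMulLog ψ + negMulLog (1 - ψ * p) := by
  have hq : 1 - p ≠ 0 := by linarith
  have hψq : 1 - ψ * p ≠ 0 := by nlinarith
  rw [lambdaStar_zero]
  simp only [LambdaStar, negMulLog, mul_div_cancel_right₀ ψ hp0.ne', log_div hψq hq, one_div, log_inv]
  ring

lemma le_log_one_div_one_sub (hp1 : p < 1) : p ≤ log (1 / (1 - p)) := by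
  rw [one_div, log_inv]
  linarith [log_le_sub_one_of_pos (sub_pos.mpr hp1)]

lemma lambdaStar_zero_sub_lambdaStar_mul_le (hp0 : 0 < p) (hp1 : p < 1) {ψ : ℝ} (hψ0 : 0 ≤ ψ)
    (hψ1 : ψ ≤ 1) :
    LambdaStar p 0 - LambdaStar p (ψ * p) ≤ (2 * ψ + negMulLog ψ) * log (1 / (1 - p)) := by
  have hpL := le_log_one_div_one_sub hp1
  have hent : negMulLog (1 - ψ * p) ≤ ψ * p := by
    simpa using negMulLog_le_one_sub_self (x := 1 - ψ * p) (by nlinarith)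
  have hnml := negMulLog_nonneg hψ0 hψ1
  have hL : 0 ≤ log (1 / (1 - p)) := hp0.le.trans hpL
  rw [lambdaStar_zero_sub_lambdaStar_mul hp0 hp1 hψ1]
  linarith [mul_le_mul_of_nonneg_right hpL hnml, mul_le_mul_of_nonneg_left hpL hψ0,
    mul_le_mul_of_nonneg_left hp1.le (mul_nonneg hψ0 hL)]

end LambdaStar

lemma exists_mem_Ioo_two_mul_add_negMulLog_lt {ξ : ℝ} (hξ : 0 < ξ) :
    ∃ δ ∈ Ioo (0 : ℝ) 1, 2 * δ + negMulLog δ < ξ := by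
  have hlim : Tendsto (fun δ => 2 * δ + negMulLog δ) (𝓝[>] 0) (𝓝 0) := by
    have : Continuous fun δ : ℝ => 2 * δ + negMulLog δ := by fun_prop
    simpa using (this.tendsto 0).mono_left nhdsWithin_le_nhds
  obtain ⟨δ, hδξ, hδ⟩ := ((hlim.eventually (gt_mem_nhds hξ)).and (Ioo_mem_nhdsGT one_pos)).exists
  exact ⟨δ, hδ, hδξ⟩

/-- existence, uniqueness, and a uniform lower bound for `ψ` with
`Λ*(ψ p) = (1−ξ) ln b`. -/
theorem psi_exists_unique_bounded (ξ : ℝ) (hξ0 : 0 < ξ) (hξ1 : ξ < 1) :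
    ∃ δ : ℝ, 0 < δ ∧ ∀ p : ℝ, 0 < p → p < 1 →
      ∃ ψ : ℝ, (ψ ∈ Set.Ioo (0 : ℝ) 1 ∧
          LambdaStar p (ψ * p) = (1 - ξ) * Real.log (1 / (1 - p)) ∧ δ ≤ ψ) ∧
        ∀ ψ' ∈ Set.Ioo (0 : ℝ) 1,
          LambdaStar p (ψ' * p) = (1 - ξ) * Real.log (1 / (1 - p)) → ψ' = ψ := by
  obtain ⟨δ, hδ, hδξ⟩ := exists_mem_Ioo_two_mul_add_negMulLog_lt hξ0
  refine ⟨δ, hδ.1, fun p hp0 hp1 => ?_⟩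
  set L := log (1 / (1 - p))
  have hL : 0 < L := hp0.trans_le (le_log_one_div_one_sub hp1)
  have hc : 0 < (1 - ξ) * L := mul_pos (sub_pos.mpr hξ1) hL
  set g := fun ψ => LambdaStar p (ψ * p)
  have hg : StrictAntiOn g (Icc 0 1) :=
    (strictAntiOn_lambdaStar hp0 hp1).comp_strictMonoOn
      ((strictMono_mul_right_of_pos hp0).strictMonoOn _)
      fun ψ hψ => ⟨mul_nonneg hψ.1 hp0.le, mul_le_of_le_one_left hp0.le hψ.2⟩
  have hg1 : g 1 = 0 := by simp [g, lambdaStar_self]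
  have hgδ : (1 - ξ) * L < g δ := by
    have := lambdaStar_zero_sub_lambdaStar_mul_le hp0 hp1 hδ.1.le hδ.2.le
    rw [lambdaStar_zero] at this
    linarith [mul_lt_mul_of_pos_right hδξ hL]
  have hgc : Continuous g := (continuous_lambdaStar hp0.ne' hp1.ne).comp (continuous_mul_const p)
  obtain ⟨ψ, hψ, hgψ⟩ := intermediate_value_Icc' hδ.2.le hgc.continuousOn
    ⟨hg1.trans_le hc.le, hgδ.le⟩
  have hψ1 : ψ ≠ 1 := by
    rintro rfl
    linarith [hg1.symm.trans hgψ]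
  refine ⟨ψ, ⟨⟨hδ.1.trans_le hψ.1, lt_of_le_of_ne hψ.2 hψ1⟩, hgψ, hψ.1⟩, fun ψ' hψ' hgψ' => ?_⟩
  exact hg.injOn ⟨hψ'.1.le, hψ'.2.le⟩ ⟨hδ.1.le.trans hψ.1, hψ.2⟩ (hgψ'.trans hgψ.symm)
end
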